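/- Let G=(V,E) be a directed graph and v₀, v_g ∈ V. If there exist positional strategies σ_r for the runner and σ_d for the demon in S^con(G) such that every play of S^con(G) from (E,v₀) consistent with both σ_r and σ_d contains a state whose runner position is v_g, then there exist positional strategies σ'_r, σ'_d in S^tb(G) such that every play of S^tb(G) from ((E,v₀),r) consistent with both σ'_r and σ'_d contains a state whose runner position is v_g. (If the coalition {r,d} can enforce F g in the concurrent game, it can in the turn-based game.) -/
import Mathlib


/-- A sabotage game-state: the set of remaining edges together with the runner's position. -/
abbrev GState (V : Type*) := Finset (V × V) × V

/-- The two agents: runner and demon. -/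
inductive Agent : Type
  | r : Agent
  | d : Agent
deriving DecidableEq

/-- A state of the turn-based sabotage game structure: a game-state plus the agent owning it. -/
abbrev TbState (V : Type*) := GState V × Agent

section Defs

variable {V : Type*} [DecidableEq V]

/-- Runner's available actions in the turn-based structure (`none` is skip). -/
def tbActR (s : TbState V) : Set (Option (V × V)) :=
  match s.2 with
  | Agent.r => {a | ∃ e ∈ s.1.1, e.1 = s.1.2 ∧ a = some e}
  | Agent.d => {none}

/-- Demon's available actions in the turn-based structure (`none` is skip). -/
def tbActD (s : TbState V) : Set (Option (V × V)) :=
  match s.2 with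
  | Agent.r => {none}
  | Agent.d => {a | ∃ e ∈ s.1.1, a = some e}

/-- Transition function of the turn-based sabotage game structure. -/
def tbDelta (s : TbState V) (ar ad : Option (V × V)) : TbState V :=
  match ar, ad with
  | some e, _ => ((s.1.1, e.2), Agent.d)
  | none, some e => ((s.1.1.erase e, s.1.2), Agent.r)
  | none, none => s

/-- `t` arises from `s` in the turn-based structure by the available action pair `(ar, ad)`. -/
def tbStepBy (s : TbState V) (ar ad : Option (V × V)) (t : TbState V) : Prop :=
  ar ∈ tbActR s ∧ ad ∈ tbActD s ∧ t = tbDelta s ar ad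

/-- One-step transition relation of the turn-based structure. -/
def tbStep (s t : TbState V) : Prop := ∃ ar ad, tbStepBy s ar ad t

/-- Runner's available actions in the concurrent structure. -/
def conActR (s : GState V) : Set (V × V) := {e | e ∈ s.1 ∧ e.1 = s.2}

/-- Demon's available actions in the concurrent structure. -/
def conActD (s : GState V) : Set (V × V) := {e | e ∈ s.1}

/-- Transition function of the concurrent sabotage game structure. -/
def conDelta (s : GState V) (er ed : V × V) : GState V :=
  if er = ed then s else (s.1.erase ed, er.2)

/-- `t` arises from `s` in the concurrent structure by the available action pair `(er, ed)`. -/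
def conStepBy (s : GState V) (er ed : V × V) (t : GState V) : Prop :=
  er ∈ s.1 ∧ er.1 = s.2 ∧ ed ∈ s.1 ∧ t = conDelta s er ed

/-- One-step transition relation of the concurrent structure. -/
def conStep (s t : GState V) : Prop := ∃ er ed, conStepBy s er ed t

/-- Runner's available actions in the general structure (`none` is skip, always available). -/
def genActR (s : GState V) : Set (Option (V × V)) :=
  {a | a = none ∨ ∃ e ∈ s.1, e.1 = s.2 ∧ a = some e}

/-- Demon's available actions in the general structure (`none` is skip, always available). -/
def genActD (s : GState V) : Set (Option (V × V)) :=
  {a | a = none ∨ ∃ e ∈ s.1, a = some e}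

/-- Transition function of the general sabotage game structure. -/
def genDelta (s : GState V) (ar ad : Option (V × V)) : GState V :=
  match ar, ad with
  | none, none => s
  | none, some ed => (s.1.erase ed, s.2)
  | some er, none => (s.1, er.2)
  | some er, some ed => if er = ed then s else (s.1.erase ed, er.2)

/-- `t` arises from `s` in the general structure by the available action pair `(ar, ad)`. -/
def genStepBy (s : GState V) (ar ad : Option (V × V)) (t : GState V) : Prop :=
  ar ∈ genActR s ∧ ad ∈ genActD s ∧ t = genDelta s ar ad

/-- One-step transition relation of the general structure. -/
def genStep (s t : GState V) : Prop := ∃ ar ad, genStepBy s ar ad t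

/-- A (finite or infinite) play: a maximal sequence of states starting at `s₀`, where each state
arises from its predecessor by the step relation. `p n = none` means the play has already ended. -/
def IsPlay {S : Type*} (step : S → S → Prop) (s₀ : S) (p : ℕ → Option S) : Prop :=
  p 0 = some s₀ ∧
  (∀ n t, p (n + 1) = some t → ∃ s, p n = some s ∧ step s t) ∧
  (∀ n s, p n = some s → (∃ t, step s t) → (p (n + 1)).isSome)

/-- The structural label of a game-state `(E', v)`: the proposition `p_v` (coded `Sum.inl v`)
together with the propositions `q_e` for `e ∈ E'` (coded `Sum.inr e`). -/
def label (s : GState V) : Set (V ⊕ (V × V)) :=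
  {x | x = Sum.inl s.2 ∨ ∃ e ∈ s.1, x = Sum.inr e}

/-- `σ` is a positional runner strategy in the turn-based structure. -/
def TbStratR (σ : TbState V → Option (V × V)) : Prop :=
  ∀ s, (tbActR s).Nonempty → σ s ∈ tbActR s

/-- `σ` is a positional demon strategy in the turn-based structure. -/
def TbStratD (σ : TbState V → Option (V × V)) : Prop :=
  ∀ s, (tbActD s).Nonempty → σ s ∈ tbActD s

/-- The play `p` is consistent with the runner strategy `σ` in the turn-based structure. -/
def TbConsR (σ : TbState V → Option (V × V)) (p : ℕ → Option (TbState V)) : Prop :=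
  ∀ n s t, p n = some s → p (n + 1) = some t → ∃ ad, tbStepBy s (σ s) ad t

/-- The play `p` is consistent with the demon strategy `σ` in the turn-based structure. -/
def TbConsD (σ : TbState V → Option (V × V)) (p : ℕ → Option (TbState V)) : Prop :=
  ∀ n s t, p n = some s → p (n + 1) = some t → ∃ ar, tbStepBy s ar (σ s) t

/-- The play `p` is consistent with both strategies in the turn-based structure. -/
def TbConsRD (σr σd : TbState V → Option (V × V)) (p : ℕ → Option (TbState V)) : Prop :=
  ∀ n s t, p n = some s → p (n + 1) = some t → tbStepBy s (σr s) (σd s) t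

/-- `σ` is a positional runner strategy in the concurrent structure. -/
def ConStratR (σ : GState V → V × V) : Prop :=
  ∀ s, (conActR s).Nonempty → σ s ∈ conActR s

/-- `σ` is a positional demon strategy in the concurrent structure. -/
def ConStratD (σ : GState V → V × V) : Prop :=
  ∀ s, (conActD s).Nonempty → σ s ∈ conActD s

/-- The play `p` is consistent with both strategies in the concurrent structure. -/
def ConConsRD (σr σd : GState V → V × V) (p : ℕ → Option (GState V)) : Prop :=
  ∀ n s t, p n = some s → p (n + 1) = some t → conStepBy s (σr s) (σd s) t

/-- Runner has a winning strategy in the turn-based reachability sabotage game with goal `vg`,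
from the game-state `(E', v)`. -/
def Reach (vg : V) (E' : Finset (V × V)) (v : V) : Prop :=
  v = vg ∨ ∃ e ∈ E', e.1 = v ∧ ∀ f ∈ E', Reach vg (E'.erase f) e.2
termination_by E'.card
decreasing_by exact Finset.card_erase_lt_of_mem (by assumption)

/-- Runner has a winning strategy in the turn-based liveness sabotage game with liveness
parameter `b ≥ 1`, from the game-state `(E', v)`. -/
def Live : ℕ → Finset (V × V) → V → Prop
  | 0, _, _ => True
  | 1, E', v => ∃ e ∈ E', e.1 = v
  | n + 2, E', v => ∃ e ∈ E', e.1 = v ∧ ∀ f ∈ E', Live (n + 1) (E'.erase f) e.2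

end Defs

/-- Formulas of sabotage modal logic over a set `P` of propositions. -/
inductive SML (P : Type*) : Type _
  | top : SML P
  | atom : P → SML P
  | neg : SML P → SML P
  | and : SML P → SML P → SML P
  | dia : SML P → SML P
  | sab : SML P → SML P

namespace SML
/-- Disjunction. -/
def or {P : Type*} (φ ψ : SML P) : SML P := .neg (.and (.neg φ) (.neg ψ))
/-- Box. -/
def box {P : Type*} (φ : SML P) : SML P := .neg (.dia (.neg φ))
/-- Sabotage box `■`. -/
def sabBox {P : Type*} (φ : SML P) : SML P := .neg (.sab (.neg φ))
end SML

/-- Truth of an SML formula at world `w` of the sabotage model `(W, R, Val)`. -/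
def Sat {W P : Type*} [DecidableEq W] (Val : P → Set W) :
    SML P → Finset (W × W) → W → Prop
  | .top, _, _ => True
  | .atom q, _, w => w ∈ Val q
  | .neg φ, R, w => ¬ Sat Val φ R w
  | .and φ ψ, R, w => Sat Val φ R w ∧ Sat Val ψ R w
  | .dia φ, R, w => ∃ u, (w, u) ∈ R ∧ Sat Val φ R u
  | .sab φ, R, w => ∃ x ∈ R, Sat Val φ (R.erase x) w

/-- The formulas `ρ₀ := g`, `ρ_{n+1} := g ∨ ◇■ρ_n`, over the single proposition `g`. -/
def rho : ℕ → SML Unit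
  | 0 => .atom ()
  | n + 1 => SML.or (.atom ()) (.dia (SML.sabBox (rho n)))

/-- The formulas `γ₁ := ◇⊤`, `γ_{n+1} := ◇■γ_n` (the value at `0` is a dummy). -/
def gamma : ℕ → SML Unit
  | 0 => .top
  | 1 => .dia .top
  | n + 2 => .dia (SML.sabBox (gamma (n + 1)))

/-- If the coalition `{r, d}` can jointly enforce `F g` in the concurrent
sabotage game structure `S^con(G)` from `(E, v₀)`, then it can jointly enforce `F g` in the
turn-based structure `S^tb(G)` from `((E, v₀), r)`. -/
theorem con_joint_Fg_implies_tb_joint_Fg {V : Type*} [DecidableEq V] [Fintype V]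
    (E : Finset (V × V)) (hE : E.Nonempty) (v₀ vg : V)
    (h : ∃ σr σd : GState V → V × V, ConStratR σr ∧ ConStratD σd ∧
        ∀ p : ℕ → Option (GState V), IsPlay conStep (E, v₀) p → ConConsRD σr σd p →
          ∃ n s, p n = some s ∧ s.2 = vg) :
    ∃ σr σd : TbState V → Option (V × V), TbStratR σr ∧ TbStratD σd ∧
      ∀ p : ℕ → Option (TbState V), IsPlay tbStep ((E, v₀), Agent.r) p → TbConsRD σr σd p →
        ∃ n s, p n = some s ∧ s.1.2 = vg := by
  classical
  obtain ⟨σr, σd, hR, hD, hwin⟩ := h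
  -- the deterministic joint run in the concurrent game
  set f : ℕ → GState V := fun n => Nat.rec (E, v₀) (fun _ s => conDelta s (σr s) (σd s)) n
    with hfdef
  have hf0 : f 0 = (E, v₀) := rfl
  have hfs : ∀ n, f (n + 1) = conDelta (f n) (σr (f n)) (σd (f n)) := fun n => rfl
  have hstepBy : ∀ s : GState V, (conActR s).Nonempty →
      conStepBy s (σr s) (σd s) (conDelta s (σr s) (σd s)) := by
    intro s hne
    have h1 : σr s ∈ conActR s := hR s hne
    have h2 : σd s ∈ conActD s := hD s ⟨σr s, h1.1⟩
    exact ⟨h1.1, h1.2, h2, rfl⟩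
  -- the corresponding maximal play
  set q : ℕ → Option (GState V) :=
    fun n => if ∀ i < n, (conActR (f i)).Nonempty then some (f n) else none with hqdef
  have hqpos : ∀ m, (∀ i < m, (conActR (f i)).Nonempty) → q m = some (f m) :=
    fun m hm => if_pos hm
  have hqneg : ∀ m, ¬ (∀ i < m, (conActR (f i)).Nonempty) → q m = none :=
    fun m hm => if_neg hm
  have hq0 : q 0 = some (f 0) := hqpos 0 (fun i hi => absurd hi (Nat.not_lt_zero i))
  have hqplay : IsPlay conStep (E, v₀) q := by
    refine ⟨hq0, ?_, ?_⟩
    · intro n t ht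
      by_cases hc : ∀ i < n + 1, (conActR (f i)).Nonempty
      · have hc' : ∀ i < n, (conActR (f i)).Nonempty := fun i hi => hc i (hi.trans (Nat.lt_succ_self n))
        have hqn : q n = some (f n) := hqpos n hc'
        refine ⟨f n, hqn, ?_⟩
        have ht' : t = f (n + 1) := by
          rw [hqpos (n + 1) hc] at ht
          exact (Option.some_inj.mp ht).symm
        exact ⟨σr (f n), σd (f n), by rw [ht', hfs]; exact hstepBy _ (hc n (Nat.lt_succ_self n))⟩
      · rw [hqneg (n + 1) hc] at ht; exact absurd ht (by simp)
    · intro n s hs hex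
      have hc : ∀ i < n, (conActR (f i)).Nonempty := by
        by_contra hc; rw [hqneg n hc] at hs; exact absurd hs (by simp)
      have hsf : s = f n := by
        rw [hqpos n hc] at hs
        exact (Option.some_inj.mp hs).symm
      obtain ⟨t, er, ed, h1, h2, _⟩ := hex
      have hne : (conActR (f n)).Nonempty := ⟨er, by rw [← hsf]; exact ⟨h1, h2⟩⟩
      have hc' : ∀ i < n + 1, (conActR (f i)).Nonempty := by
        intro i hi
        rcases Nat.lt_succ_iff_lt_or_eq.mp hi with hi | hi
        · exact hc i hi
        · rw [hi]; exact hne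
      rw [hqpos (n + 1) hc']; rfl
  have hqcons : ConConsRD σr σd q := by
    intro n s t hs ht
    by_cases hc : ∀ i < n + 1, (conActR (f i)).Nonempty
    · have hc' : ∀ i < n, (conActR (f i)).Nonempty := fun i hi => hc i (hi.trans (Nat.lt_succ_self n))
      have hsf : s = f n := by
        rw [hqpos n hc'] at hs
        exact (Option.some_inj.mp hs).symm
      have htf : t = f (n + 1) := by
        rw [hqpos (n + 1) hc] at ht
        exact (Option.some_inj.mp ht).symm
      rw [hsf, htf, hfs]
      exact hstepBy _ (hc n (Nat.lt_succ_self n))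
    · rw [hqneg (n + 1) hc] at ht; exact absurd ht (by simp)
  obtain ⟨n, s, hn, hvg⟩ := hwin q hqplay hqcons
  have halive : ∀ i < n, (conActR (f i)).Nonempty := by
    by_contra hc; rw [hqneg n hc] at hn; exact absurd hn (by simp)
  have hsf : s = f n := by
    rw [hqpos n halive] at hn
    exact (Option.some_inj.mp hn).symm
  have hP : ∃ k, (f k).2 = vg := ⟨n, hsf ▸ hvg⟩
  -- N : first time the run hits vg
  set N := Nat.find hP with hNdef
  have hNvg : (f N).2 = vg := Nat.find_spec hP
  have hNle : N ≤ n := Nat.find_le (hsf ▸ hvg)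
  have hNmin : ∀ i < N, (f i).2 ≠ vg := fun i hi => Nat.find_min hP hi
  have haliveN : ∀ i < N, (conActR (f i)).Nonempty := by
    intro i hi
    rcases lt_or_eq_of_le hNle with h' | h'
    · exact halive i (hi.trans h')
    · exact halive i (h' ▸ hi)
  have hmemR : ∀ i < N, σr (f i) ∈ (f i).1 ∧ (σr (f i)).1 = (f i).2 :=
    fun i hi => hR (f i) (haliveN i hi)
  have hmemD : ∀ i < N, σd (f i) ∈ (f i).1 :=
    fun i hi => hD (f i) ⟨σr (f i), (hmemR i hi).1⟩
  -- all steps before N are genuine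
  have hgen : ∀ i < N, σr (f i) ≠ σd (f i) := by
    intro i hi heq
    have hfix : f (i + 1) = f i := by rw [hfs]; simp [conDelta, heq]
    have hconst : ∀ j, f (i + j) = f i := by
      intro j
      induction j with
      | zero => rfl
      | succ k ih =>
        have : i + (k + 1) = (i + k) + 1 := rfl
        rw [this, hfs, ih, ← heq]
        simp [conDelta]
    have : (f i).2 = vg := by
      have hni : i + (n - i) = n := by omega
      have := hconst (n - i)
      rw [hni] at this
      rw [← this, ← hsf]; exact hvg
    exact hNmin i hi this
  have hfstep : ∀ i < N, f (i + 1) = ((f i).1.erase (σd (f i)), (σr (f i)).2) := by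
    intro i hi
    rw [hfs]
    simp [conDelta, hgen i hi]
  -- cardinalities strictly decrease: index is recoverable from the edge set
  have hcard : ∀ i ≤ N, (f i).1.card + i = E.card := by
    intro i hi
    induction i with
    | zero => simp [hf0]
    | succ k ih =>
      have hk : k < N := hi
      have hk' := ih (le_of_lt hk)
      rw [hfstep k hk]
      have hcd : ((f k).1.erase (σd (f k))).card = (f k).1.card - 1 :=
        Finset.card_erase_of_mem (hmemD k hk)
      have hpos : 0 < (f k).1.card := Finset.card_pos.mpr ⟨σd (f k), hmemD k hk⟩
      simp only [hcd]
      omega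
  have hidx : ∀ i ≤ N, E.card - (f i).1.card = i := by
    intro i hi
    have := hcard i hi
    omega
  -- the turn-based strategies
  set σR : TbState V → Option (V × V) := fun s =>
    match s.2 with
    | Agent.d => none
    | Agent.r =>
        if E.card - s.1.1.card < N ∧ s.1 = f (E.card - s.1.1.card) then
          some (σr (f (E.card - s.1.1.card)))
        else if h : (tbActR s).Nonempty then h.choose else none
    with hσRdef
  set σD : TbState V → Option (V × V) := fun s =>
    match s.2 with
    | Agent.r => none
    | Agent.d =>
        if E.card - s.1.1.card < N ∧ s.1.1 = (f (E.card - s.1.1.card)).1 ∧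
            s.1.2 = (σr (f (E.card - s.1.1.card))).2 then
          some (σd (f (E.card - s.1.1.card)))
        else if h : (tbActD s).Nonempty then h.choose else none
    with hσDdef
  refine ⟨σR, σD, ?_, ?_, ?_⟩
  · -- TbStratR
    rintro ⟨⟨E', v⟩, a⟩ hne
    cases a with
    | d => exact rfl
    | r =>
      show (if E.card - E'.card < N ∧ ((E', v) : GState V) = f (E.card - E'.card) then
          some (σr (f (E.card - E'.card)))
        else if h : (tbActR ((E', v), Agent.r)).Nonempty then h.choose else none) ∈
          tbActR ((E', v), Agent.r)
      split
      · rename_i hcond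
        obtain ⟨hlt, heq⟩ := hcond
        refine ⟨σr (f (E.card - E'.card)), ?_, ?_, rfl⟩
        · have := (hmemR _ hlt).1
          rw [heq]; exact this
        · have := (hmemR _ hlt).2
          rw [heq]; exact this
      · exact hne.choose_spec
  · -- TbStratD
    rintro ⟨⟨E', v⟩, a⟩ hne
    cases a with
    | r => exact rfl
    | d =>
      show (if E.card - E'.card < N ∧ E' = (f (E.card - E'.card)).1 ∧
            v = (σr (f (E.card - E'.card))).2 then
          some (σd (f (E.card - E'.card)))
        else if h : (tbActD ((E', v), Agent.d)).Nonempty then h.choose else none) ∈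
          tbActD ((E', v), Agent.d)
      split
      · rename_i hcond
        obtain ⟨hlt, heq, _⟩ := hcond
        refine ⟨σd (f (E.card - E'.card)), ?_, rfl⟩
        have hm := hmemD (E.card - E'.card) hlt
        rw [← heq] at hm
        exact hm
      · exact hne.choose_spec
  · -- the joint turn-based play reaches vg
    intro p hp hcons
    have hdet : ∀ m s, p m = some s → (∃ t, tbStep s t) →
        p (m + 1) = some (tbDelta s (σR s) (σD s)) := by
      intro m s hm hex
      have h3 := hp.2.2 m s hm hex
      obtain ⟨t, ht⟩ := Option.isSome_iff_exists.mp h3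
      have hc := hcons m s t hm ht
      rw [ht, hc.2.2]
    -- value of strategies along the run
    have hσRr : ∀ i < N, σR (f i, Agent.r) = some (σr (f i)) := by
      intro i hi
      show (if E.card - (f i).1.card < N ∧ f i = f (E.card - (f i).1.card) then
          some (σr (f (E.card - (f i).1.card)))
        else if h : (tbActR (f i, Agent.r)).Nonempty then h.choose else none) = some (σr (f i))
      rw [hidx i (le_of_lt hi), if_pos ⟨hi, rfl⟩]
    have hσDr : ∀ g : GState V, σD (g, Agent.r) = none := fun g => rfl
    have hσRd : ∀ g : GState V, σR (g, Agent.d) = none := fun g => rfl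
    have hσDd : ∀ i < N, σD (((f i).1, (σr (f i)).2), Agent.d) = some (σd (f i)) := by
      intro i hi
      show (if E.card - (f i).1.card < N ∧ (f i).1 = (f (E.card - (f i).1.card)).1 ∧
            (σr (f i)).2 = (σr (f (E.card - (f i).1.card))).2 then
          some (σd (f (E.card - (f i).1.card)))
        else if h : (tbActD (((f i).1, (σr (f i)).2), Agent.d)).Nonempty then h.choose else none)
          = some (σd (f i))
      rw [hidx i (le_of_lt hi), if_pos ⟨hi, rfl, rfl⟩]
    have hmain : ∀ i ≤ N, p (2 * i) = some (f i, Agent.r) := by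
      intro i hi
      induction i with
      | zero =>
        have := hp.1
        simpa [hf0] using this
      | succ k ih =>
        have hk : k < N := hi
        have hpk := ih (le_of_lt hk)
        -- step 1: runner moves
        have hex1 : ∃ t, tbStep (f k, Agent.r) t := by
          refine ⟨tbDelta (f k, Agent.r) (some (σr (f k))) none, some (σr (f k)), none, ?_, ?_, rfl⟩
          · exact ⟨σr (f k), (hmemR k hk).1, (hmemR k hk).2, rfl⟩
          · exact rfl
        have h1 := hdet (2 * k) _ hpk hex1
        rw [hσRr k hk] at h1
        have h1' : p (2 * k + 1) = some (((f k).1, (σr (f k)).2), Agent.d) := h1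
        -- step 2: demon moves
        have hex2 : ∃ t, tbStep (((f k).1, (σr (f k)).2), Agent.d) t := by
          refine ⟨tbDelta (((f k).1, (σr (f k)).2), Agent.d) none (some (σd (f k))),
            none, some (σd (f k)), rfl, ?_, rfl⟩
          exact ⟨σd (f k), hmemD k hk, rfl⟩
        have h2 := hdet (2 * k + 1) _ h1' hex2
        rw [hσDd k hk] at h2
        have h2' : p (2 * k + 2) =
            some (((f k).1.erase (σd (f k)), (σr (f k)).2), Agent.r) := h2
        have : (2 : ℕ) * (k + 1) = 2 * k + 2 := by ring
        rw [this, h2', hfstep k hk]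
    exact ⟨2 * N, (f N, Agent.r), hmain N le_rfl, hNvg⟩
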